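/- Both z_min and z_max are strictly decreasing functions of T on (0,∞): their derivatives dz_min/dT = CAe^{A(T+τ₁)}(I-e^{AT})^{-2}B and dz_max/dT = CAe^{A(T+τ₂)}(I-e^{AT})^{-2}B are negative for all T > 0. -/

import Mathlib

open Matrix Set Filter

noncomputable def Acas (a₁ a₂ a₃ g₁ g₂ : ℝ) : Matrix (Fin 3) (Fin 3) ℝ :=
  !![-a₁, 0, 0; g₁, -a₂, 0; 0, g₂, -a₃]

def Bcas : Fin 3 → ℝ := ![1, 0, 0]

/-- impulse response g(t) = C e^{tA} B with C = (0,0,1) -/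
noncomputable def impResp (a₁ a₂ a₃ g₁ g₂ : ℝ) (t : ℝ) : ℝ :=
  ((NormedSpace.exp (t • Acas a₁ a₂ a₃ g₁ g₂)) *ᵥ Bcas) 2

/-- z(τ,T) = C e^{Aτ} (I - e^{AT})⁻¹ B -/
noncomputable def zfun (a₁ a₂ a₃ g₁ g₂ : ℝ) (τ T : ℝ) : ℝ :=
  ((NormedSpace.exp (τ • Acas a₁ a₂ a₃ g₁ g₂) *
    (1 - NormedSpace.exp (T • Acas a₁ a₂ a₃ g₁ g₂))⁻¹) *ᵥ Bcas) 2

noncomputable def zmaxF (a₁ a₂ a₃ g₁ g₂ T : ℝ) : ℝ :=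
  sSup ((fun τ => zfun a₁ a₂ a₃ g₁ g₂ τ T) '' Set.Icc 0 T)

noncomputable def zminF (a₁ a₂ a₃ g₁ g₂ T : ℝ) : ℝ :=
  sInf ((fun τ => zfun a₁ a₂ a₃ g₁ g₂ τ T) '' Set.Icc 0 T)

/-!
Diagonalising the cascade matrix turns every function of `Acas` into a divided difference over
the decay rates: `z(τ, T) = g₁ g₂ [a₁, a₂, a₃] r` with `r(a) = e^{-aτ} / (1 - e^{-aT})`, and
`∂z/∂T = -g₁ g₂ [a₁, a₂, a₃] (r h)` with `h(a) = a / (e^{aT} - 1)`. Both `r` and `h` are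
positive, decreasing and convex in `a` (`h` strictly), so by the Leibniz rule for divided
differences `[a₁, a₂, a₃] (r h) > 0`, and `z(τ, ·)` is strictly decreasing for every `τ ≥ 0`.
For `z_min` this suffices: `z_min(T') ≤ z(τ₁(T), T') < z(τ₁(T), T) = z_min(T)`. For `z_max` the
maximiser `θ = τ₂(T')` may lie beyond `T`; it is folded back into `[0, T]` with
`z(σ + T, T) = z(σ, T) - g(σ)`, the impulse response `g = g₁ g₂ [a₁, a₂, a₃] e^{-aσ}` being
nonnegative.
-/

open Real

section DividedDifference

variable {𝕜 : Type*} [Field 𝕜]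

def divDiff2 (f : 𝕜 → 𝕜) (x y z : 𝕜) : 𝕜 :=
  f x / ((y - x) * (z - x)) + f y / ((x - y) * (z - y)) + f z / ((x - z) * (y - z))

lemma divDiff2_swap₁₂ (f : 𝕜 → 𝕜) (x y z : 𝕜) : divDiff2 f y x z = divDiff2 f x y z := by
  unfold divDiff2; ring

lemma divDiff2_swap₂₃ (f : 𝕜 → 𝕜) (x y z : 𝕜) : divDiff2 f x z y = divDiff2 f x y z := by
  unfold divDiff2; ring

lemma divDiff2_sub (f g : 𝕜 → 𝕜) (x y z : 𝕜) :
    divDiff2 (f - g) x y z = divDiff2 f x y z - divDiff2 g x y z := by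
  simp only [divDiff2, Pi.sub_apply]; ring

lemma divDiff2_neg (f : 𝕜 → 𝕜) (x y z : 𝕜) : divDiff2 (-f) x y z = -divDiff2 f x y z := by
  simp only [divDiff2, Pi.neg_apply]; ring

variable {x y z : 𝕜}

lemma divDiff2_congr {f g : 𝕜 → 𝕜} (hx : f x = g x) (hy : f y = g y) (hz : f z = g z) :
    divDiff2 f x y z = divDiff2 g x y z := by
  simp only [divDiff2, hx, hy, hz]

lemma divDiff2_eq_slope_sub_slope (f : 𝕜 → 𝕜) (hxy : x ≠ y) (hxz : x ≠ z) (hyz : y ≠ z) :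
    divDiff2 f x y z = (slope f y z - slope f x y) / (z - x) := by
  have := sub_ne_zero.2 hxy; have := sub_ne_zero.2 hxz; have := sub_ne_zero.2 hyz
  have := sub_ne_zero.2 hxy.symm; have := sub_ne_zero.2 hxz.symm; have := sub_ne_zero.2 hyz.symm
  simp only [divDiff2, slope_def_field]
  field_simp
  ring

lemma divDiff2_mul (f g : 𝕜 → 𝕜) (hxy : x ≠ y) (hxz : x ≠ z) (hyz : y ≠ z) :
    divDiff2 (f * g) x y z =
      divDiff2 f x y z * g x + slope f y z * slope g x y + f z * divDiff2 g x y z := by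
  have := sub_ne_zero.2 hxy; have := sub_ne_zero.2 hxz; have := sub_ne_zero.2 hyz
  have := sub_ne_zero.2 hxy.symm; have := sub_ne_zero.2 hxz.symm; have := sub_ne_zero.2 hyz.symm
  simp only [divDiff2, slope_def_field, Pi.mul_apply]
  field_simp
  ring

variable [LinearOrder 𝕜] {s : Set 𝕜} {f g : 𝕜 → 𝕜}

lemma divDiff2_mem_of_forall_lt {t : Set 𝕜}
    (h : ∀ ⦃x y z⦄, x ∈ s → y ∈ s → z ∈ s → x < y → y < z → divDiff2 f x y z ∈ t)
    (hx : x ∈ s) (hy : y ∈ s) (hz : z ∈ s) (hxy : x ≠ y) (hxz : x ≠ z) (hyz : y ≠ z) :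
    divDiff2 f x y z ∈ t := by
  rcases hxy.lt_or_gt with h₁ | h₁ <;> rcases hxz.lt_or_gt with h₂ | h₂ <;>
    rcases hyz.lt_or_gt with h₃ | h₃
  · exact h hx hy hz h₁ h₃
  · rw [← divDiff2_swap₂₃]; exact h hx hz hy h₂ h₃
  · exact absurd (h₁.trans h₃) h₂.not_gt
  · rw [← divDiff2_swap₂₃, ← divDiff2_swap₁₂]; exact h hz hx hy h₂ h₁
  · rw [← divDiff2_swap₁₂]; exact h hy hx hz h₁ h₂
  · exact absurd (h₁.trans h₂) h₃.not_gt
  · rw [← divDiff2_swap₁₂, ← divDiff2_swap₂₃]; exact h hy hz hx h₃ h₂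
  · rw [← divDiff2_swap₁₂, ← divDiff2_swap₂₃, ← divDiff2_swap₁₂]; exact h hz hy hx h₃ h₁

variable [IsStrictOrderedRing 𝕜]

lemma ConvexOn.divDiff2_nonneg (hf : ConvexOn 𝕜 s f) (hx : x ∈ s) (hy : y ∈ s) (hz : z ∈ s)
    (hxy : x ≠ y) (hxz : x ≠ z) (hyz : y ≠ z) : 0 ≤ divDiff2 f x y z := by
  refine divDiff2_mem_of_forall_lt (t := Ici 0) (fun x y z hx _ hz hxy hyz => ?_)
    hx hy hz hxy hxz hyz
  rw [mem_Ici, divDiff2_eq_slope_sub_slope f hxy.ne (hxy.trans hyz).ne hyz.ne, slope_def_field,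
    slope_def_field]
  exact div_nonneg (sub_nonneg.2 (hf.slope_mono_adjacent hx hz hxy hyz))
    (sub_nonneg.2 (hxy.trans hyz).le)

lemma StrictConvexOn.divDiff2_pos (hf : StrictConvexOn 𝕜 s f) (hx : x ∈ s) (hy : y ∈ s)
    (hz : z ∈ s) (hxy : x ≠ y) (hxz : x ≠ z) (hyz : y ≠ z) : 0 < divDiff2 f x y z := by
  refine divDiff2_mem_of_forall_lt (t := Ioi 0) (fun x y z hx _ hz hxy hyz => ?_)
    hx hy hz hxy hxz hyz
  rw [mem_Ioi, divDiff2_eq_slope_sub_slope f hxy.ne (hxy.trans hyz).ne hyz.ne, slope_def_field,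
    slope_def_field]
  exact div_pos (sub_pos.2 (hf.slope_strict_mono_adjacent hx hz hxy hyz))
    (sub_pos.2 (hxy.trans hyz))

lemma divDiff2_mul_pos (hf : ConvexOn 𝕜 s f) (hg : StrictConvexOn 𝕜 s g)
    (hf₀ : ∀ x ∈ s, 0 < f x) (hg₀ : ∀ x ∈ s, 0 ≤ g x) (hf' : AntitoneOn f s)
    (hg' : AntitoneOn g s) (hx : x ∈ s) (hy : y ∈ s) (hz : z ∈ s) (hxy : x ≠ y) (hxz : x ≠ z)
    (hyz : y ≠ z) : 0 < divDiff2 (f * g) x y z := by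
  rw [divDiff2_mul f g hxy hxz hyz]
  have h₁ := mul_nonneg (hf.divDiff2_nonneg hx hy hz hxy hxz hyz) (hg₀ x hx)
  have h₂ := mul_nonneg_of_nonpos_of_nonpos (hf'.slope_nonpos hy hz) (hg'.slope_nonpos hx hy)
  have h₃ := mul_pos (hf₀ z hz) (hg.divDiff2_pos hx hy hz hxy hxz hyz)
  linarith

end DividedDifference

lemma HasDerivAt.divDiff2 {𝕜 : Type*} [NontriviallyNormedField 𝕜] {F : 𝕜 → 𝕜 → 𝕜}
    {F' : 𝕜 → 𝕜} {t x y z : 𝕜} (hx : HasDerivAt (fun s => F s x) (F' x) t)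
    (hy : HasDerivAt (fun s => F s y) (F' y) t) (hz : HasDerivAt (fun s => F s z) (F' z) t) :
    HasDerivAt (fun s => divDiff2 (F s) x y z) (divDiff2 F' x y z) t :=
  ((hx.div_const _).add (hy.div_const _)).add (hz.div_const _)

section Calculus

variable {D : Set ℝ} {f f' f'' : ℝ → ℝ}

lemma strictAntiOn_of_hasDerivAt_neg (hD : Convex ℝ D) (hf : ∀ x ∈ D, HasDerivAt f (f' x) x)
    (hf' : ∀ x ∈ D, f' x < 0) : StrictAntiOn f D :=
  strictAntiOn_of_hasDerivWithinAt_neg hD (fun x hx => (hf x hx).continuousAt.continuousWithinAt)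
    (fun x hx => (hf x (interior_subset hx)).hasDerivWithinAt)
    (fun x hx => hf' x (interior_subset hx))

lemma strictConvexOn_of_hasDerivAt2_pos (hD : Convex ℝ D) (hf : ∀ x ∈ D, HasDerivAt f (f' x) x)
    (hf' : ∀ x ∈ D, HasDerivAt f' (f'' x) x) (hf'' : ∀ x ∈ D, 0 < f'' x) :
    StrictConvexOn ℝ D f := by
  have hmono : StrictMonoOn f' D :=
    strictMonoOn_of_hasDerivWithinAt_pos hD
      (fun x hx => (hf' x hx).continuousAt.continuousWithinAt)
      (fun x hx => (hf' x (interior_subset hx)).hasDerivWithinAt)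
      (fun x hx => hf'' x (interior_subset hx))
  refine StrictMonoOn.strictConvexOn_of_deriv hD
    (fun x hx => (hf x hx).continuousAt.continuousWithinAt) ?_
  exact (hmono.mono interior_subset).congr fun x hx => (hf x (interior_subset hx)).deriv.symm

lemma pos_of_hasDerivAt_pos (hf : ∀ x, HasDerivAt f (f' x) x) (h₀ : f 0 = 0)
    (hf' : ∀ x, 0 < x → 0 < f' x) {x : ℝ} (hx : 0 < x) : 0 < f x := by
  have hmono : StrictMonoOn f (Ici 0) :=
    strictMonoOn_of_hasDerivWithinAt_pos (convex_Ici 0)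
      (fun y _ => (hf y).continuousAt.continuousWithinAt)
      (fun y _ => (hf y).hasDerivWithinAt)
      (fun y hy => hf' y (by simpa using hy))
  simpa [h₀] using hmono self_mem_Ici hx.le hx

end Calculus

lemma sub_one_mul_exp_add_one_pos {x : ℝ} (hx : 0 < x) : 0 < (x - 1) * exp x + 1 := by
  have hf (y : ℝ) : HasDerivAt (fun y => (y - 1) * exp y + 1) (y * exp y) y :=
    ((((hasDerivAt_id' y).sub_const 1).mul (hasDerivAt_exp y)).add_const 1).congr_deriv
      (by ring)
  exact pos_of_hasDerivAt_pos hf (by simp) (fun y hy => by positivity) hx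

/-- Equivalently, `tanh (x / 2) < x / 2` for `x > 0`. -/
lemma sub_two_mul_exp_add_add_two_pos {x : ℝ} (hx : 0 < x) : 0 < (x - 2) * exp x + x + 2 := by
  have hf (y : ℝ) : HasDerivAt (fun y => (y - 2) * exp y + y + 2) ((y - 1) * exp y + 1) y :=
    (((((hasDerivAt_id' y).sub_const 2).mul (hasDerivAt_exp y)).add
      (hasDerivAt_id' y)).add_const 2).congr_deriv (by ring)
  exact pos_of_hasDerivAt_pos hf (by simp) (fun y hy => sub_one_mul_exp_add_one_pos hy) hx

lemma hasDerivAt_exp_neg_mul (c a : ℝ) :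
    HasDerivAt (fun b => exp (-(b * c))) (-c * exp (-(a * c))) a := by
  simpa [mul_comm] using ((hasDerivAt_mul_const c).neg).exp

lemma convexOn_exp_neg_mul (c : ℝ) : ConvexOn ℝ univ (fun a => exp (-(a * c))) := by
  refine (convexOn_exp.comp_linearMap (-c • LinearMap.id)).congr fun a _ => ?_
  simp [mul_comm]

/-- `∑ₖ e^{-a(τ + kT)}`: the response of the mode `e^{-at}` to a `T`-periodic impulse train. -/
noncomputable def periodicResponse (τ T a : ℝ) : ℝ := exp (-(a * τ)) / (1 - exp (-(a * T)))

noncomputable def periodicRate (T a : ℝ) : ℝ := a / (exp (a * T) - 1)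

section Periodic

variable {τ T a : ℝ}

lemma one_sub_exp_neg_mul_pos (ha : 0 < a) (hT : 0 < T) : 0 < 1 - exp (-(a * T)) :=
  sub_pos.2 (exp_lt_one_iff.2 (neg_neg_of_pos (mul_pos ha hT)))

lemma exp_mul_sub_one_pos (ha : 0 < a) (hT : 0 < T) : 0 < exp (a * T) - 1 :=
  sub_pos.2 (one_lt_exp_iff.2 (mul_pos ha hT))

lemma periodicResponse_pos (τ : ℝ) (ha : 0 < a) (hT : 0 < T) : 0 < periodicResponse τ T a :=
  div_pos (exp_pos _) (one_sub_exp_neg_mul_pos ha hT)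

lemma periodicRate_pos (ha : 0 < a) (hT : 0 < T) : 0 < periodicRate T a :=
  div_pos ha (exp_mul_sub_one_pos ha hT)

lemma antitoneOn_exp_neg_mul (hτ : 0 ≤ τ) : AntitoneOn (fun a => exp (-(a * τ))) (Ioi 0) :=
  fun _ _ _ _ hab => exp_le_exp.2 (neg_le_neg (mul_le_mul_of_nonneg_right hab hτ))

lemma antitoneOn_inv_one_sub_exp_neg_mul (hT : 0 < T) :
    AntitoneOn (fun a => (1 - exp (-(a * T)))⁻¹) (Ioi 0) := fun _ ha _ hb hab =>
  inv_anti₀ (one_sub_exp_neg_mul_pos ha hT)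
    (sub_le_sub_left (antitoneOn_exp_neg_mul hT.le ha hb hab) 1)

lemma strictConvexOn_inv_one_sub_exp_neg_mul (hT : 0 < T) :
    StrictConvexOn ℝ (Ioi 0) (fun a => (1 - exp (-(a * T)))⁻¹) := by
  refine strictConvexOn_of_hasDerivAt2_pos (convex_Ioi 0)
    (f' := fun a => -(T * exp (-(a * T))) / (1 - exp (-(a * T))) ^ 2)
    (f'' := fun a => T ^ 2 * exp (-(a * T)) * (1 + exp (-(a * T))) / (1 - exp (-(a * T))) ^ 3)
    (fun a ha => ?_) (fun a ha => ?_)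
    (fun a ha => by have := one_sub_exp_neg_mul_pos ha hT; positivity)
  all_goals
    have hu := hasDerivAt_exp_neg_mul T a
    have hne := (one_sub_exp_neg_mul_pos ha hT).ne'
  · exact ((hu.const_sub 1).inv hne).congr_deriv (by ring)
  · refine (((hu.const_mul T).neg).div ((hu.const_sub 1).pow 2) (pow_ne_zero 2 hne)).congr_deriv ?_
    simp only [Pi.pow_apply, Pi.neg_apply]
    norm_num
    field_simp
    ring

lemma convexOn_periodicResponse (hτ : 0 ≤ τ) (hT : 0 < T) :
    ConvexOn ℝ (Ioi 0) (periodicResponse τ T) := by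
  have h := ((convexOn_exp_neg_mul τ).subset (subset_univ _) (convex_Ioi 0)).mul
    (strictConvexOn_inv_one_sub_exp_neg_mul hT).convexOn (fun a _ => (exp_pos _).le)
    (fun a ha => (inv_pos.2 (one_sub_exp_neg_mul_pos ha hT)).le)
    ((antitoneOn_exp_neg_mul hτ).monovaryOn (antitoneOn_inv_one_sub_exp_neg_mul hT))
  exact h.congr fun a _ => (div_eq_mul_inv _ _).symm

lemma antitoneOn_periodicResponse (hτ : 0 ≤ τ) (hT : 0 < T) :
    AntitoneOn (periodicResponse τ T) (Ioi 0) := fun _ ha _ hb hab =>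
  div_le_div₀ (exp_pos _).le (antitoneOn_exp_neg_mul hτ ha hb hab)
    (one_sub_exp_neg_mul_pos ha hT)
    (sub_le_sub_left (antitoneOn_exp_neg_mul hT.le ha hb hab) 1)

lemma hasDerivAt_periodicRate (ha : 0 < a) (hT : 0 < T) :
    HasDerivAt (periodicRate T)
      ((exp (a * T) - 1 - a * T * exp (a * T)) / (exp (a * T) - 1) ^ 2) a :=
  ((hasDerivAt_id' a).div ((hasDerivAt_mul_const T).exp.sub_const 1)
    (exp_mul_sub_one_pos ha hT).ne').congr_deriv (by ring)

lemma strictConvexOn_periodicRate (hT : 0 < T) : StrictConvexOn ℝ (Ioi 0) (periodicRate T) := by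
  refine strictConvexOn_of_hasDerivAt2_pos (convex_Ioi 0)
    (fun a ha => hasDerivAt_periodicRate ha hT)
    (f'' := fun a => T * exp (a * T) * ((a * T - 2) * exp (a * T) + a * T + 2) /
      (exp (a * T) - 1) ^ 3) (fun a ha => ?_) (fun a ha => ?_)
  all_goals have hpos := exp_mul_sub_one_pos ha hT
  · have hE := (hasDerivAt_mul_const T).exp (x := a)
    refine ((((hE.sub_const 1).sub ((hasDerivAt_mul_const T).mul hE))).div
      ((hE.sub_const 1).pow 2) (pow_ne_zero 2 hpos.ne')).congr_deriv ?_
    simp only [Pi.pow_apply]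
    norm_num
    field_simp
    ring
  · have := sub_two_mul_exp_add_add_two_pos (mul_pos ha hT)
    positivity

lemma antitoneOn_periodicRate (hT : 0 < T) : AntitoneOn (periodicRate T) (Ioi 0) := by
  refine (strictAntiOn_of_hasDerivAt_neg (convex_Ioi 0)
    (fun a ha => hasDerivAt_periodicRate ha hT) fun a ha => ?_).antitoneOn
  have := sub_one_mul_exp_add_one_pos (mul_pos ha hT)
  have := exp_mul_sub_one_pos ha hT
  exact div_neg_of_neg_of_pos (by linarith) (by positivity)

lemma hasDerivAt_periodicResponse_period (τ : ℝ) (ha : 0 < a) (hT : 0 < T) :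
    HasDerivAt (fun t => periodicResponse τ t a)
      (-(periodicResponse τ T a * periodicRate T a)) T := by
  have hd : HasDerivAt (fun t => 1 - exp (-(a * t))) (a * exp (-(a * T))) T :=
    (((hasDerivAt_id' T).const_mul a).neg.exp.const_sub 1).congr_deriv (by simp [mul_comm])
  have := (exp_mul_sub_one_pos ha hT).ne'
  refine ((hasDerivAt_const T (exp (-(a * τ)))).div hd
    (one_sub_exp_neg_mul_pos ha hT).ne').congr_deriv ?_
  simp only [periodicResponse, periodicRate, exp_neg (a * T)]
  field_simp
  ring

lemma periodicResponse_mul_periodicRate (τ : ℝ) (ha : 0 < a) (hT : 0 < T) :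
    periodicResponse τ T a * periodicRate T a =
      a * exp (-(a * (T + τ))) * ((1 - exp (-(a * T)))⁻¹) ^ 2 := by
  have := (one_sub_exp_neg_mul_pos ha hT).ne'
  have := (exp_mul_sub_one_pos ha hT).ne'
  simp only [periodicResponse, periodicRate, show -(a * (T + τ)) = -(a * τ) + -(a * T) by ring,
    exp_add, exp_neg (a * T)]
  field_simp

lemma periodicResponse_add_period (σ : ℝ) (ha : 0 < a) (hT : 0 < T) :
    periodicResponse (σ + T) T a = periodicResponse σ T a - exp (-(a * σ)) := by
  have := (one_sub_exp_neg_mul_pos ha hT).ne'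
  rw [periodicResponse, periodicResponse, show -(a * (σ + T)) = -(a * σ) + -(a * T) by ring,
    exp_add]
  field_simp
  ring

end Periodic

section Diagonalization

variable {n : Type*} [Fintype n] [DecidableEq n]

noncomputable def conjDiagonal (U : (Matrix n n ℝ)ˣ) : (n → ℝ) →ₐ[ℝ] Matrix n n ℝ :=
  (MulSemiringAction.toAlgHom ℝ _ (ConjAct.toConjAct U)).comp (diagonalAlgHom ℝ)

lemma conjDiagonal_apply (U : (Matrix n n ℝ)ˣ) (v : n → ℝ) :
    conjDiagonal U v = U * diagonal v * (U : Matrix n n ℝ)⁻¹ := by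
  simp [conjDiagonal, ConjAct.units_smul_def]

lemma exp_conjDiagonal (U : (Matrix n n ℝ)ˣ) (v : n → ℝ) :
    NormedSpace.exp (conjDiagonal U v) = conjDiagonal U (fun i => exp (v i)) := by
  rw [conjDiagonal_apply, ← coe_units_inv, exp_units_conj, exp_diagonal, conjDiagonal_apply,
    coe_units_inv]
  congr
  funext i
  rw [Pi.coe_exp, exp_eq_exp_ℝ]

lemma inv_conjDiagonal (U : (Matrix n n ℝ)ˣ) {v : n → ℝ} (hv : ∀ i, v i ≠ 0) :
    (conjDiagonal U v)⁻¹ = conjDiagonal U v⁻¹ := by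
  refine inv_eq_right_inv ?_
  rw [← map_mul, ← map_one (conjDiagonal U)]
  congr
  funext i
  exact mul_inv_cancel₀ (hv i)

end Diagonalization

/-- The columns are eigenvectors of `Acas` for the eigenvalues `-a₁`, `-a₂`, `-a₃`. -/
noncomputable def cascadeEigenvectors (a₁ a₂ a₃ g₁ g₂ : ℝ) : Matrix (Fin 3) (Fin 3) ℝ :=
  !![1, 0, 0;
    g₁ / (a₂ - a₁), 1, 0;
    g₁ * g₂ / ((a₂ - a₁) * (a₃ - a₁)), g₂ / (a₃ - a₂), 1]

lemma det_cascadeEigenvectors (a₁ a₂ a₃ g₁ g₂ : ℝ) :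
    (cascadeEigenvectors a₁ a₂ a₃ g₁ g₂).det = 1 := by
  simp [cascadeEigenvectors, det_fin_three]

noncomputable def cascadeFunCalc (a₁ a₂ a₃ g₁ g₂ : ℝ) :
    (Fin 3 → ℝ) →ₐ[ℝ] Matrix (Fin 3) (Fin 3) ℝ :=
  conjDiagonal <| (cascadeEigenvectors a₁ a₂ a₃ g₁ g₂).nonsingInvUnit <| by
    simp [det_cascadeEigenvectors]

noncomputable def zfunDeriv (a₁ a₂ a₃ g₁ g₂ τ T : ℝ) : ℝ :=
  ((Acas a₁ a₂ a₃ g₁ g₂ * NormedSpace.exp ((T + τ) • Acas a₁ a₂ a₃ g₁ g₂) *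
    ((1 - NormedSpace.exp (T • Acas a₁ a₂ a₃ g₁ g₂))⁻¹) ^ 2) *ᵥ Bcas) 2

section Cascade

variable {a₁ a₂ a₃ g₁ g₂ : ℝ}

lemma cascadeFunCalc_apply (v : Fin 3 → ℝ) :
    cascadeFunCalc a₁ a₂ a₃ g₁ g₂ v = cascadeEigenvectors a₁ a₂ a₃ g₁ g₂ * diagonal v *
      (cascadeEigenvectors a₁ a₂ a₃ g₁ g₂)⁻¹ :=
  conjDiagonal_apply _ v

variable (h₁₂ : a₁ ≠ a₂) (h₁₃ : a₁ ≠ a₃) (h₂₃ : a₂ ≠ a₃)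
include h₁₂ h₁₃ h₂₃

lemma inv_cascadeEigenvectors :
    (cascadeEigenvectors a₁ a₂ a₃ g₁ g₂)⁻¹ =
      !![1, 0, 0;
        -(g₁ / (a₂ - a₁)), 1, 0;
        g₁ * g₂ / ((a₃ - a₁) * (a₃ - a₂)), -(g₂ / (a₃ - a₂)), 1] := by
  refine inv_eq_right_inv ?_
  have := sub_ne_zero.2 h₁₂.symm; have := sub_ne_zero.2 h₁₃.symm; have := sub_ne_zero.2 h₂₃.symm
  ext i j
  fin_cases i <;> fin_cases j <;> simp [cascadeEigenvectors, mul_apply, Fin.sum_univ_three]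
  field_simp
  ring

lemma Acas_eq_cascadeFunCalc :
    Acas a₁ a₂ a₃ g₁ g₂ = cascadeFunCalc a₁ a₂ a₃ g₁ g₂ (fun i => -![a₁, a₂, a₃] i) := by
  have := sub_ne_zero.2 h₁₂.symm; have := sub_ne_zero.2 h₁₃.symm; have := sub_ne_zero.2 h₂₃.symm
  rw [cascadeFunCalc_apply, inv_cascadeEigenvectors h₁₂ h₁₃ h₂₃]
  ext i j
  simp only [mul_apply, Fin.sum_univ_three]
  fin_cases i <;> fin_cases j <;> simp [Acas, cascadeEigenvectors] <;> field_simp <;> ring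

lemma cascadeFunCalc_mulVec_Bcas (f : ℝ → ℝ) :
    (cascadeFunCalc a₁ a₂ a₃ g₁ g₂ (fun i => f (![a₁, a₂, a₃] i)) *ᵥ Bcas) 2 =
      g₁ * g₂ * divDiff2 f a₁ a₂ a₃ := by
  have := sub_ne_zero.2 h₁₂.symm; have := sub_ne_zero.2 h₁₃.symm; have := sub_ne_zero.2 h₂₃.symm
  have := sub_ne_zero.2 h₁₂; have := sub_ne_zero.2 h₁₃; have := sub_ne_zero.2 h₂₃
  rw [cascadeFunCalc_apply, inv_cascadeEigenvectors h₁₂ h₁₃ h₂₃]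
  simp only [mulVec, dotProduct, mul_apply, Fin.sum_univ_three]
  simp [cascadeEigenvectors, divDiff2, Bcas]
  field_simp
  ring

lemma exp_smul_Acas (t : ℝ) :
    NormedSpace.exp (t • Acas a₁ a₂ a₃ g₁ g₂) =
      cascadeFunCalc a₁ a₂ a₃ g₁ g₂ (fun i => exp (-(![a₁, a₂, a₃] i * t))) := by
  rw [Acas_eq_cascadeFunCalc h₁₂ h₁₃ h₂₃, ← map_smul]
  refine (exp_conjDiagonal _ _).trans ?_
  congr
  funext i
  simp [mul_comm]

lemma impResp_eq_divDiff2 (t : ℝ) :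
    impResp a₁ a₂ a₃ g₁ g₂ t = g₁ * g₂ * divDiff2 (fun a => exp (-(a * t))) a₁ a₂ a₃ := by
  rw [impResp, exp_smul_Acas h₁₂ h₁₃ h₂₃, ← cascadeFunCalc_mulVec_Bcas h₁₂ h₁₃ h₂₃]

lemma impResp_nonneg (hg₁ : 0 ≤ g₁) (hg₂ : 0 ≤ g₂) (t : ℝ) : 0 ≤ impResp a₁ a₂ a₃ g₁ g₂ t := by
  rw [impResp_eq_divDiff2 h₁₂ h₁₃ h₂₃]
  exact mul_nonneg (mul_nonneg hg₁ hg₂)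
    ((convexOn_exp_neg_mul t).divDiff2_nonneg trivial trivial trivial h₁₂ h₁₃ h₂₃)

variable (ha₁ : 0 < a₁) (ha₂ : 0 < a₂) (ha₃ : 0 < a₃)
include ha₁ ha₂ ha₃

lemma inv_one_sub_exp_smul_Acas {T : ℝ} (hT : 0 < T) :
    (1 - NormedSpace.exp (T • Acas a₁ a₂ a₃ g₁ g₂))⁻¹ =
      cascadeFunCalc a₁ a₂ a₃ g₁ g₂ (fun i => (1 - exp (-(![a₁, a₂, a₃] i * T)))⁻¹) := by
  rw [exp_smul_Acas h₁₂ h₁₃ h₂₃, ← map_one (cascadeFunCalc a₁ a₂ a₃ g₁ g₂), ← map_sub]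
  refine inv_conjDiagonal _ fun i => ?_
  fin_cases i <;> exact (one_sub_exp_neg_mul_pos ‹_› hT).ne'

lemma zfun_eq_divDiff2 (τ : ℝ) {T : ℝ} (hT : 0 < T) :
    zfun a₁ a₂ a₃ g₁ g₂ τ T = g₁ * g₂ * divDiff2 (periodicResponse τ T) a₁ a₂ a₃ := by
  rw [zfun, exp_smul_Acas h₁₂ h₁₃ h₂₃, inv_one_sub_exp_smul_Acas h₁₂ h₁₃ h₂₃ ha₁ ha₂ ha₃ hT,
    ← map_mul, ← cascadeFunCalc_mulVec_Bcas h₁₂ h₁₃ h₂₃]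
  rfl

lemma zfunDeriv_eq_neg_divDiff2 (τ : ℝ) {T : ℝ} (hT : 0 < T) :
    zfunDeriv a₁ a₂ a₃ g₁ g₂ τ T =
      g₁ * g₂ * divDiff2 (-(periodicResponse τ T * periodicRate T)) a₁ a₂ a₃ := by
  rw [zfunDeriv, exp_smul_Acas h₁₂ h₁₃ h₂₃, inv_one_sub_exp_smul_Acas h₁₂ h₁₃ h₂₃ ha₁ ha₂ ha₃ hT,
    Acas_eq_cascadeFunCalc h₁₂ h₁₃ h₂₃, ← map_pow, ← map_mul, ← map_mul,
    ← cascadeFunCalc_mulVec_Bcas h₁₂ h₁₃ h₂₃]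
  congr 2
  funext i
  have ha : 0 < ![a₁, a₂, a₃] i := by fin_cases i <;> assumption
  simp only [Pi.mul_apply, Pi.pow_apply, Pi.neg_apply, periodicResponse_mul_periodicRate τ ha hT]
  ring

lemma hasDerivAt_zfun (τ : ℝ) {T : ℝ} (hT : 0 < T) :
    HasDerivAt (fun t => zfun a₁ a₂ a₃ g₁ g₂ τ t) (zfunDeriv a₁ a₂ a₃ g₁ g₂ τ T) T := by
  rw [zfunDeriv_eq_neg_divDiff2 h₁₂ h₁₃ h₂₃ ha₁ ha₂ ha₃ τ hT]
  refine HasDerivAt.congr_of_eventuallyEq ?_ <| (eventually_gt_nhds hT).mono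
    fun t ht => zfun_eq_divDiff2 h₁₂ h₁₃ h₂₃ ha₁ ha₂ ha₃ τ ht
  exact ((hasDerivAt_periodicResponse_period τ ha₁ hT).divDiff2
    (hasDerivAt_periodicResponse_period τ ha₂ hT)
    (hasDerivAt_periodicResponse_period τ ha₃ hT)).const_mul (g₁ * g₂)

lemma zfun_add_period (σ : ℝ) {T : ℝ} (hT : 0 < T) :
    zfun a₁ a₂ a₃ g₁ g₂ (σ + T) T = zfun a₁ a₂ a₃ g₁ g₂ σ T - impResp a₁ a₂ a₃ g₁ g₂ σ := by
  rw [zfun_eq_divDiff2 h₁₂ h₁₃ h₂₃ ha₁ ha₂ ha₃ _ hT, zfun_eq_divDiff2 h₁₂ h₁₃ h₂₃ ha₁ ha₂ ha₃ _ hT,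
    impResp_eq_divDiff2 h₁₂ h₁₃ h₂₃, ← mul_sub, ← divDiff2_sub]
  exact congrArg _ (divDiff2_congr (periodicResponse_add_period σ ha₁ hT)
    (periodicResponse_add_period σ ha₂ hT) (periodicResponse_add_period σ ha₃ hT))

variable (hg₁ : 0 < g₁) (hg₂ : 0 < g₂)
include hg₁ hg₂

lemma zfunDeriv_neg {τ T : ℝ} (hτ : 0 ≤ τ) (hT : 0 < T) : zfunDeriv a₁ a₂ a₃ g₁ g₂ τ T < 0 := by
  rw [zfunDeriv_eq_neg_divDiff2 h₁₂ h₁₃ h₂₃ ha₁ ha₂ ha₃ τ hT, divDiff2_neg]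
  refine mul_neg_of_pos_of_neg (mul_pos hg₁ hg₂) (neg_neg_of_pos ?_)
  exact divDiff2_mul_pos (convexOn_periodicResponse hτ hT) (strictConvexOn_periodicRate hT)
    (fun a ha => periodicResponse_pos τ ha hT) (fun a ha => (periodicRate_pos ha hT).le)
    (antitoneOn_periodicResponse hτ hT) (antitoneOn_periodicRate hT) ha₁ ha₂ ha₃ h₁₂ h₁₃ h₂₃

lemma zfun_strictAntiOn {τ : ℝ} (hτ : 0 ≤ τ) :
    StrictAntiOn (fun t => zfun a₁ a₂ a₃ g₁ g₂ τ t) (Ioi 0) :=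
  strictAntiOn_of_hasDerivAt_neg (convex_Ioi 0)
    (fun _ hT => hasDerivAt_zfun h₁₂ h₁₃ h₂₃ ha₁ ha₂ ha₃ τ hT)
    (fun _ hT => zfunDeriv_neg h₁₂ h₁₃ h₂₃ ha₁ ha₂ ha₃ hg₁ hg₂ hτ hT)

lemma zfun_add_nat_mul_le (σ : ℝ) {T : ℝ} (hT : 0 < T) (k : ℕ) :
    zfun a₁ a₂ a₃ g₁ g₂ (σ + k * T) T ≤ zfun a₁ a₂ a₃ g₁ g₂ σ T := by
  induction k with
  | zero => simp
  | succ k ih =>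
    rw [Nat.cast_succ, add_one_mul, ← add_assoc,
      zfun_add_period h₁₂ h₁₃ h₂₃ ha₁ ha₂ ha₃ _ hT]
    linarith [impResp_nonneg h₁₂ h₁₃ h₂₃ hg₁.le hg₂.le (σ + k * T)]

lemma exists_mem_Icc_zfun_le {θ T : ℝ} (hθ : 0 ≤ θ) (hT : 0 < T) :
    ∃ σ ∈ Icc 0 T, zfun a₁ a₂ a₃ g₁ g₂ θ T ≤ zfun a₁ a₂ a₃ g₁ g₂ σ T := by
  set k := ⌊θ / T⌋₊
  have hk : k * T ≤ θ := (le_div_iff₀ hT).1 (Nat.floor_le (div_nonneg hθ hT.le))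
  have hk' : θ < (k + 1) * T := (div_lt_iff₀ hT).1 (Nat.lt_floor_add_one _)
  refine ⟨θ - k * T, ⟨by linarith, by linarith⟩, ?_⟩
  simpa using zfun_add_nat_mul_le h₁₂ h₁₃ h₂₃ ha₁ ha₂ ha₃ hg₁ hg₂ (θ - k * T) hT k

end Cascade

theorem zmin_zmax_decreasing (a₁ a₂ a₃ g₁ g₂ : ℝ)
    (ha₁ : 0 < a₁) (ha₂ : 0 < a₂) (ha₃ : 0 < a₃)
    (h₁₂ : a₁ ≠ a₂) (h₁₃ : a₁ ≠ a₃) (h₂₃ : a₂ ≠ a₃)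
    (hg₁ : 0 < g₁) (hg₂ : 0 < g₂)
    (τ₁ τ₂ : ℝ → ℝ)
    (hτ₁ : ∀ T : ℝ, 0 < T → τ₁ T ∈ Set.Ioo 0 T ∧
      IsMinOn (fun τ => zfun a₁ a₂ a₃ g₁ g₂ τ T) (Set.Icc 0 T) (τ₁ T))
    (hτ₂ : ∀ T : ℝ, 0 < T → τ₂ T ∈ Set.Ioo 0 T ∧
      IsMaxOn (fun τ => zfun a₁ a₂ a₃ g₁ g₂ τ T) (Set.Icc 0 T) (τ₂ T)) :
    (∀ T : ℝ, 0 < T →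
      ((Acas a₁ a₂ a₃ g₁ g₂ *
        NormedSpace.exp ((T + τ₁ T) • Acas a₁ a₂ a₃ g₁ g₂) *
        ((1 - NormedSpace.exp (T • Acas a₁ a₂ a₃ g₁ g₂))⁻¹) ^ 2) *ᵥ Bcas) 2 < 0 ∧
      ((Acas a₁ a₂ a₃ g₁ g₂ *
        NormedSpace.exp ((T + τ₂ T) • Acas a₁ a₂ a₃ g₁ g₂) *
        ((1 - NormedSpace.exp (T • Acas a₁ a₂ a₃ g₁ g₂))⁻¹) ^ 2) *ᵥ Bcas) 2 < 0) ∧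
    StrictAntiOn (zminF a₁ a₂ a₃ g₁ g₂) (Set.Ioi 0) ∧
    StrictAntiOn (zmaxF a₁ a₂ a₃ g₁ g₂) (Set.Ioi 0) := by
  have hzmin (T : ℝ) (hT : 0 < T) : zminF a₁ a₂ a₃ g₁ g₂ T = zfun a₁ a₂ a₃ g₁ g₂ (τ₁ T) T :=
    ((hτ₁ T hT).2.isGLB (Ioo_subset_Icc_self (hτ₁ T hT).1)).csInf_eq
      ((nonempty_Icc.2 hT.le).image _)
  have hzmax (T : ℝ) (hT : 0 < T) : zmaxF a₁ a₂ a₃ g₁ g₂ T = zfun a₁ a₂ a₃ g₁ g₂ (τ₂ T) T :=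
    ((hτ₂ T hT).2.isLUB (Ioo_subset_Icc_self (hτ₂ T hT).1)).csSup_eq
      ((nonempty_Icc.2 hT.le).image _)
  have hanti {τ : ℝ} (hτ : 0 ≤ τ) := zfun_strictAntiOn h₁₂ h₁₃ h₂₃ ha₁ ha₂ ha₃ hg₁ hg₂ hτ
  refine ⟨fun T hT => ⟨?_, ?_⟩, fun T hT T' hT' hTT' => ?_, fun T hT T' hT' hTT' => ?_⟩
  · exact zfunDeriv_neg h₁₂ h₁₃ h₂₃ ha₁ ha₂ ha₃ hg₁ hg₂ (hτ₁ T hT).1.1.le hT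
  · exact zfunDeriv_neg h₁₂ h₁₃ h₂₃ ha₁ ha₂ ha₃ hg₁ hg₂ (hτ₂ T hT).1.1.le hT
  · obtain ⟨⟨hτ₀, hτT⟩, -⟩ := hτ₁ T hT
    rw [hzmin T hT, hzmin T' hT']
    calc zfun a₁ a₂ a₃ g₁ g₂ (τ₁ T') T' ≤ zfun a₁ a₂ a₃ g₁ g₂ (τ₁ T) T' :=
          (hτ₁ T' hT').2 ⟨hτ₀.le, (hτT.trans hTT').le⟩
      _ < zfun a₁ a₂ a₃ g₁ g₂ (τ₁ T) T := hanti hτ₀.le hT hT' hTT'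
  · have hθ := (hτ₂ T' hT').1.1.le
    obtain ⟨σ, hσ, hfold⟩ := exists_mem_Icc_zfun_le h₁₂ h₁₃ h₂₃ ha₁ ha₂ ha₃ hg₁ hg₂ hθ hT
    rw [hzmax T hT, hzmax T' hT']
    calc zfun a₁ a₂ a₃ g₁ g₂ (τ₂ T') T' < zfun a₁ a₂ a₃ g₁ g₂ (τ₂ T') T := hanti hθ hT hT' hTT'
      _ ≤ zfun a₁ a₂ a₃ g₁ g₂ σ T := hfold
      _ ≤ zfun a₁ a₂ a₃ g₁ g₂ (τ₂ T) T := (hτ₂ T hT).2 hσ
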